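/- arXiv:2305.07784 — 2 statements merged into one kernel-verified Lean document; each statement's English description precedes it below -/
import Mathlib

section
/- Every uncountable Borel subset of a Polish space contains a homeomorphic copy of the Cantor space 2^ℕ, hence has cardinality 2^ℵ₀. -/
private lemma cantor_embed_aux {X : Type*} (t t' : TopologicalSpace X) (hle : t' ≤ t)
    (hT2 : @T2Space X t) (hpol : @PolishSpace X t') {B : Set X}
    (hclosed : @IsClosed X t' B) (hunc : ¬ B.Countable) :
    ∃ e : (ℕ → Bool) → X, @Topology.IsEmbedding _ _ _ t e ∧ Set.range e ⊆ B := by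
  obtain ⟨f, hrange, hcont, hinj⟩ :=
    @IsClosed.exists_nat_bool_injection_of_not_countable X t' hpol B hclosed hunc
  letI := t
  haveI := hT2
  have hcont' : Continuous f := continuous_le_rng hle hcont
  exact ⟨f, (hcont'.isClosedEmbedding hinj).isEmbedding, hrange⟩

/-- Perfect set property for Borel sets: every uncountable Borel subset of a
Polish space contains a homeomorphic copy of the Cantor space `2^ℕ`, and
hence has cardinality `2^ℵ₀`. -/
theorem borel_perfect_set_property (X : Type*) [TopologicalSpace X]
    [PolishSpace X] (B : Set X)
    (hB : @MeasurableSet X (borel X) B) (hunc : ¬ B.Countable) :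
    (∃ e : (ℕ → Bool) → X, Topology.IsEmbedding e ∧ Set.range e ⊆ B) ∧
      Cardinal.mk B = 2 ^ Cardinal.aleph0 := by
  letI : MeasurableSpace X := borel X
  haveI : BorelSpace X := ⟨rfl⟩
  constructor
  · obtain ⟨t', hle, hpol, hclosed, -⟩ := hB.isClopenable
    exact cantor_embed_aux _ t' hle inferInstance hpol hclosed hunc
  · haveI : StandardBorelSpace ↥B := hB.standardBorel
    have hnc : ¬Countable ↥B := by rwa [Set.countable_coe_iff]
    have e := PolishSpace.measurableEquivNatBoolOfNotCountable (α := ↥B) hnc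
    have h0 : Cardinal.mk (ℕ → Bool) = 2 ^ Cardinal.aleph0 := by
      rw [← Cardinal.power_def, Cardinal.mk_bool, Cardinal.mk_nat]
    rw [Cardinal.mk_congr (e.toEquiv.trans Equiv.ulift.symm), Cardinal.mk_uLift, h0,
      Cardinal.lift_two_power, Cardinal.lift_aleph0]
end

section
/- In the language of rings {+, ·, 0, 1}, the theory of algebraically closed fields is model complete: if K ⊆ L are algebraically closed fields, then K is an elementary substructure of L. -/
/-!
Over the language of rings with constants for the elements of `K`, consider `ACF_p`
(`p` the characteristic of `K`) together with the positive diagram of `K`; its models are the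
algebraically closed fields `M` equipped with an embedding `K →+* M`. Two such models of the same
uncountable cardinality `κ > #K` have transcendence bases over `K` of cardinality `κ`, hence are
isomorphic over `K`. By the Łoś–Vaught test this theory is complete, and both `K` and `L` are
models of it, so they satisfy the same sentences with parameters from `K`.
-/

open Cardinal

universe u

namespace IsAlgClosed

theorem nonempty_algEquiv_of_isTranscendenceBasis {R M N : Type*} [CommRing R] [Field M] [Field N]
    [Algebra R M] [Algebra R N] [IsAlgClosed M] [IsAlgClosed N] {ι κ : Type*}
    {v : ι → M} {w : κ → N} (e : ι ≃ κ) (hv : IsTranscendenceBasis R v)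
    (hw : IsTranscendenceBasis R w) : Nonempty (M ≃ₐ[R] N) := by
  have := isAlgClosure_of_transcendence_basis v hv
  have := isAlgClosure_of_transcendence_basis w hw
  have : Module.IsTorsionFree (Algebra.adjoin R (Set.range v)) M :=
    Module.isTorsionFree_iff_algebraMap_injective.2 Subtype.val_injective
  have : Module.IsTorsionFree (Algebra.adjoin R (Set.range w)) N :=
    Module.isTorsionFree_iff_algebraMap_injective.2 Subtype.val_injective
  let e' : Algebra.adjoin R (Set.range v) ≃ₐ[R] Algebra.adjoin R (Set.range w) :=
    hv.1.aevalEquiv.symm.trans ((MvPolynomial.renameEquiv R e).trans hw.1.aevalEquiv)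
  refine ⟨AlgEquiv.ofRingEquiv (f := IsAlgClosure.equivOfEquiv M N e'.toRingEquiv) fun a => ?_⟩
  rw [IsScalarTower.algebraMap_apply R (Algebra.adjoin R (Set.range v)) M,
    IsAlgClosure.equivOfEquiv_algebraMap, AlgEquiv.coe_ringEquiv, e'.commutes,
    ← IsScalarTower.algebraMap_apply]

theorem cardinalMk_eq_of_isTranscendenceBasis {R M ι : Type u} [CommRing R] [Field M]
    [Algebra R M] [IsAlgClosed M] {v : ι → M} (hv : IsTranscendenceBasis R v)
    (hM : ℵ₀ < #M) (hR : #R < #M) : #ι = #M := by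
  have := (algebraMap R M).domain_nontrivial
  refine le_antisymm (mk_le_of_injective hv.1.injective) (le_of_not_gt fun hι => ?_)
  exact (cardinal_le_max_transcendence_basis' v hv).not_gt (max_lt (max_lt hR hι) hM)

theorem nonempty_algEquiv_of_cardinalMk_eq {R M N : Type u} [Field R] [Field M] [Field N]
    [Algebra R M] [Algebra R N] [IsAlgClosed M] [IsAlgClosed N]
    (hM : ℵ₀ < #M) (hR : #R < #M) (h : #M = #N) : Nonempty (M ≃ₐ[R] N) := by
  obtain ⟨s, hs⟩ := exists_isTranscendenceBasis R M
  obtain ⟨t, ht⟩ := exists_isTranscendenceBasis R N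
  have hst : #s = #t := by
    rw [cardinalMk_eq_of_isTranscendenceBasis hs hM hR,
      cardinalMk_eq_of_isTranscendenceBasis ht (h ▸ hM) (h ▸ hR), h]
  exact nonempty_algEquiv_of_isTranscendenceBasis (Cardinal.eq.1 hst).some hs ht

end IsAlgClosed

namespace FirstOrder.Language

variable {L : Language} {α M N : Type*} [L.Structure M] [L.Structure N]
  [L[[α]].Structure M] [L[[α]].Structure N]
  [(L.lhomWithConstants α).IsExpansionOn M] [(L.lhomWithConstants α).IsExpansionOn N]

def Equiv.liftWithConstants (f : M ≃[L] N) (hf : ∀ a : α, f (L.con a) = L.con a) :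
    M ≃[L[[α]]] N where
  toEquiv := f.toEquiv
  map_fun' := by
    rintro n (g | a) x
    · simp only [withConstants_funMap_sumInl]
      exact f.map_fun g x
    · cases n with
      | zero =>
        simp only [Unique.eq_default]
        exact hf a
      | succ n => exact isEmptyElim a
  map_rel' := by
    rintro n (r | r) x
    · simp only [withConstants_relMap_sumInl]
      exact f.map_rel r x
    · exact isEmptyElim r

end FirstOrder.Language

open FirstOrder Language Ring Cardinal

namespace FirstOrder.Field

def ringHomFormulas (K : Type*) [Add K] [Mul K] [One K] : Set (Language.ring.Formula K) :=
  {(Term.var 1).equal 1} ∪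
    ⋃ (a : K) (b : K), {(Term.var (a + b)).equal (Term.var a + Term.var b),
      (Term.var (a * b)).equal (Term.var a * Term.var b)}

theorem realize_ringHomFormulas_iff {K M : Type*} [Semiring K] [Ring M] [CompatibleRing M]
    (g : K → M) : (∀ φ ∈ ringHomFormulas K, φ.Realize g) ↔ ∃ f : K →+* M, ⇑f = g := by
  simp only [ringHomFormulas, Set.mem_union, Set.mem_singleton_iff, Set.mem_iUnion,
    Set.mem_insert_iff]
  constructor
  · intro h
    have map_one : g 1 = 1 := by simpa using h _ (Or.inl rfl)
    have map_add (a b : K) : g (a + b) = g a + g b := by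
      simpa using h _ (Or.inr ⟨a, b, Or.inl rfl⟩)
    have map_mul (a b : K) : g (a * b) = g a * g b := by
      simpa using h _ (Or.inr ⟨a, b, Or.inr rfl⟩)
    exact ⟨RingHom.mk' ⟨⟨g, map_one⟩, map_mul⟩ map_add, rfl⟩
  · rintro ⟨f, rfl⟩ φ (rfl | ⟨a, b, rfl | rfl⟩) <;> simp

/-- The free variables of `ringHomFormulas K` are indexed by `K`; `Formula.equivSentence` turns
them into the new constants, so the second part is the positive diagram of `K`. -/
def acfOver (K : Type*) [Field K] : (Language.ring[[K]]).Theory :=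
  (lhomWithConstants Language.ring K).onTheory (Theory.ACF (ringChar K)) ∪
    Formula.equivSentence '' ringHomFormulas K

section Models

variable {K M : Type*} [Field K] [Language.ring[[K]].Structure M]

theorem model_acfOver [Field M] [IsAlgClosed M] [CompatibleRing M]
    [(lhomWithConstants Language.ring K).IsExpansionOn M]
    (g : K →+* M) (hg : ∀ a, (Language.ring.con a : M) = g a) : M ⊨ acfOver K := by
  have : CharP M (ringChar K) := charP_of_injective_ringHom g.injective _
  refine Theory.model_union_iff.2 ⟨(LHom.onTheory_model _ _).2 inferInstance, ?_⟩
  refine (Theory.model_iff _).2 ?_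
  rintro _ ⟨φ, hφ, rfl⟩
  rw [Formula.realize_equivSentence]
  exact (realize_ringHomFormulas_iff _).2 ⟨g, funext fun a => (hg a).symm⟩ φ hφ

theorem model_acf_of_model_acfOver [Language.ring.Structure M]
    [(lhomWithConstants Language.ring K).IsExpansionOn M] (h : M ⊨ acfOver K) :
    M ⊨ Theory.ACF (ringChar K) :=
  (LHom.onTheory_model _ _).1 (Theory.model_union_iff.1 h).1

theorem exists_ringHom_of_model_acfOver [Ring M] [CompatibleRing M]
    [(lhomWithConstants Language.ring K).IsExpansionOn M] (h : M ⊨ acfOver K) :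
    ∃ g : K →+* M, ∀ a, (Language.ring.con a : M) = g a := by
  have hdiag := (Theory.model_iff _).1 (Theory.model_union_iff.1 h).2
  obtain ⟨g, hg⟩ := (realize_ringHomFormulas_iff fun a => (Language.ring.con a : M)).1
    fun φ hφ => (Formula.realize_equivSentence M φ).1 (hdiag _ ⟨φ, hφ, rfl⟩)
  exact ⟨g, fun a => congrFun hg.symm a⟩

end Models

theorem acfOver_categorical {K : Type u} [Field K] {κ : Cardinal.{u}} (hκ : ℵ₀ < κ)
    (hK : #K < κ) : κ.Categorical (acfOver K) := by
  rintro ⟨M⟩ ⟨N⟩ hM hN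
  let := (lhomWithConstants Language.ring K).reduct M
  have := model_acf_of_model_acfOver (K := K) (M := M) inferInstance
  let := fieldOfModelACF (ringChar K) M
  have := modelField_of_modelACF (ringChar K) M
  let := compatibleRingOfModelField M
  have := isAlgClosed_of_model_ACF (ringChar K) M
  let := (lhomWithConstants Language.ring K).reduct N
  have := model_acf_of_model_acfOver (K := K) (M := N) inferInstance
  let := fieldOfModelACF (ringChar K) N
  have := modelField_of_modelACF (ringChar K) N
  let := compatibleRingOfModelField N
  have := isAlgClosed_of_model_ACF (ringChar K) N
  obtain ⟨gM, hgM⟩ := exists_ringHom_of_model_acfOver (K := K) (M := M) inferInstance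
  obtain ⟨gN, hgN⟩ := exists_ringHom_of_model_acfOver (K := K) (M := N) inferInstance
  let := gM.toAlgebra
  let := gN.toAlgebra
  obtain ⟨E⟩ := IsAlgClosed.nonempty_algEquiv_of_cardinalMk_eq (R := K) (M := M) (N := N)
    (hM ▸ hκ) (hM ▸ hK) (hM.trans hN.symm)
  refine ⟨(languageEquivEquivRingEquiv.symm E.toRingEquiv).liftWithConstants fun a => ?_⟩
  change E _ = _
  rw [hgM, hgN]
  exact E.commutes a

theorem infinite_of_model_acfOver {K : Type*} [Field K] (M : Type*)
    [Language.ring[[K]].Structure M] (h : M ⊨ acfOver K) : Infinite M := by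
  let := (lhomWithConstants Language.ring K).reduct M
  have := model_acf_of_model_acfOver h
  let := fieldOfModelACF (ringChar K) M
  have := modelField_of_modelACF (ringChar K) M
  let := compatibleRingOfModelField M
  have := isAlgClosed_of_model_ACF (ringChar K) M
  infer_instance

theorem acfOver_isComplete (K : Type u) [Field K] : (acfOver K).IsComplete := by
  let κ := Order.succ (max #K ℵ₀)
  have hκ : max #K ℵ₀ < κ := Order.lt_succ _
  refine (acfOver_categorical (le_sup_right.trans_lt hκ) (le_sup_left.trans_lt hκ)).isComplete
    κ _ (le_sup_right.trans hκ.le) ?_ ?_ fun M => infinite_of_model_acfOver M M.is_model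
  · simp only [lift_id, card_withConstants, card_ring, lift_ofNat, lift_id']
    refine (add_lt_of_lt (le_sup_right.trans hκ.le) ?_ (le_sup_left.trans_lt hκ)).le
    exact ofNat_lt_aleph0.trans_le (le_sup_right.trans hκ.le)
  · let := compatibleRingOfRing (AlgebraicClosure K)
    let : (constantsOn K).Structure (AlgebraicClosure K) :=
      constantsOn.structure (algebraMap K _)
    exact (model_acfOver (algebraMap K (AlgebraicClosure K)) fun _ => rfl).isSatisfiable

end FirstOrder.Field

open FirstOrder.Field in
/-- Model completeness of ACF: if `K ⊆ L` (witnessed by a ring embedding) are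
algebraically closed fields, then `K` is an elementary substructure of `L`:
every first-order formula in the language of rings with parameters in `K`
holds in `K` iff it holds in `L`. -/
theorem acf_model_complete (K L : Type*) [Field K] [Field L]
    [IsAlgClosed K] [IsAlgClosed L] (f : K →+* L) :
    letI := FirstOrder.Ring.compatibleRingOfRing K
    letI := FirstOrder.Ring.compatibleRingOfRing L
    ∀ (n : ℕ) (φ : Language.ring.Formula (Fin n)) (v : Fin n → K),
      φ.Realize v ↔ φ.Realize (f ∘ v) := by
  let := compatibleRingOfRing K
  let := compatibleRingOfRing L
  let : (constantsOn K).Structure L := constantsOn.structure f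
  intro n φ v
  have hK : K ⊨ acfOver K := model_acfOver (RingHom.id K) fun _ => rfl
  have hL : L ⊨ acfOver K := model_acfOver f fun _ => rfl
  have hT := acfOver_isComplete K
  have h := (hT.realize_sentence_iff (Formula.equivSentence (φ.relabel v)) K).trans
    (hT.realize_sentence_iff _ L).symm
  rw [Formula.realize_equivSentence, Formula.realize_equivSentence, Formula.realize_relabel,
    Formula.realize_relabel] at h
  exact h
end
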